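/- Let S be a finite non-abelian simple group and let p be a prime not dividing |S|. Let G = S ≀ ⟨σ⟩ be the wreath product of S with the cyclic group of order p generated by the p-cycle σ = (1,2,…,p), let M = S^p be the base group, and let H = {(s,…,s)σ^i : s ∈ S, 0 ≤ i ≤ p−1} be the diagonal subgroup extended by σ. Then G = M ∪ (∪_{m ∈ M} H^m); in particular γ(G) = 2. -/

import Mathlib

open scoped Pointwise

/-- The normal covering number `γ(G)`: the smallest `k` such that there are `k` proper
subgroups of `G` whose conjugates cover `G`; it is `⊤` (infinity) if no such `k` exists
(e.g. when `G` is cyclic). -/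
noncomputable def normalCoveringNumber (G : Type*) [Group G] : ℕ∞ :=
  sInf {n : ℕ∞ | ∃ k : ℕ, n = (k : ℕ∞) ∧ ∃ H : Fin k → Subgroup G,
    (∀ i, H i ≠ ⊤) ∧ ∀ g : G, ∃ i, ∃ x : G, x * g * x⁻¹ ∈ H i}

/-- The covering number `σ(G)`: the smallest number of proper subgroups of `G` whose
union is `G`; it is `⊤` (infinity) if no such number exists (e.g. when `G` is cyclic). -/
noncomputable def coveringNumber (G : Type*) [Group G] : ℕ∞ :=
  sInf {n : ℕ∞ | ∃ k : ℕ, n = (k : ℕ∞) ∧ ∃ H : Fin k → Subgroup G,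
    (∀ i, H i ≠ ⊤) ∧ ∀ g : G, ∃ i, g ∈ H i}

/-- `μ(G)`: the least integer `k` such that `G` has more than one maximal subgroup
of index `k`. -/
noncomputable def muIndex (G : Type*) [Group G] : ℕ :=
  sInf {k : ℕ | ∃ H K : Subgroup G, IsCoatom H ∧ IsCoatom K ∧ H ≠ K ∧
    H.index = k ∧ K.index = k}

/-- `m(S)`: the smallest index of a proper subgroup of `S`. -/
noncomputable def minIndex (S : Type*) [Group S] : ℕ :=
  sInf {n : ℕ | ∃ H : Subgroup S, H ≠ ⊤ ∧ H.index = n}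

variable (p : ℕ) (S : Type*) [Group S]

/-- The cyclic shift by `i`, as an automorphism of `S^p = (ZMod p → S)`. -/
def shiftAut (i : ZMod p) : MulAut (ZMod p → S) where
  toFun f := fun j => f (j + i)
  invFun f := fun j => f (j - i)
  left_inv f := funext fun j => by simp
  right_inv f := funext fun j => by simp
  map_mul' f g := rfl

/-- The action of the cyclic group of order `p` on `S^p`, permuting the
coordinates cyclically (i.e. the action of `σ = (1,2,…,p)`). -/
def shiftHom : Multiplicative (ZMod p) →* MulAut (ZMod p → S) where
  toFun i := shiftAut p S i.toAdd
  map_one' := by ext f j; simp [shiftAut]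
  map_mul' i j := by ext f k; simp [shiftAut, add_assoc]

/-- The wreath product `G = S ≀ ⟨σ⟩` with `σ = (1,2,…,p)`: the semidirect product of the
base group `M = S^p` by the cyclic group of order `p` permuting coordinates cyclically. -/
abbrev WreathCp := (ZMod p → S) ⋊[shiftHom p S] Multiplicative (ZMod p)

/-- The base group `M = S^p` of the wreath product. -/
def wreathBase : Subgroup (WreathCp p S) := SemidirectProduct.inl.range

/-- The homomorphism `(s, i) ↦ (s,…,s)σⁱ`; its range is the subgroup
`H = {(s,…,s)σⁱ : s ∈ S, 0 ≤ i ≤ p-1}` of diagonal type. -/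
def diagHom : S × Multiplicative (ZMod p) →* WreathCp p S where
  toFun x := ⟨fun _ => x.1, x.2⟩
  map_one' := rfl
  map_mul' a b := by
    ext j <;> first | rfl | simp [shiftHom, shiftAut]

/-!
An element `(f, σⁱ)` with `i ≠ 0` is conjugate under the base `M` to the diagonal element
`(c,…,c)σⁱ` as soon as `(m j)⁻¹ * c * m (j + i) = f j` has a solution `m`. Following the orbit
of `j ↦ j + i` the products telescope, so the system is solvable once `c ^ p` equals
`f 0 * f i * ⋯ * f ((p-1)i)`; such a `c` exists because `p` is coprime to `|S|`. Hence `M` and `H`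
cover `G` up to conjugacy and `γ(G) ≤ 2`. Conversely, a proper subgroup of a finite group never
covers it up to conjugacy (Jordan): by Burnside's lemma some element acts without fixed points
on its cosets.
-/

theorem MulAction.exists_forall_smul_ne (G X : Type*) [Group G] [MulAction G X] [Finite G]
    [Finite X] [IsPretransitive G X] [Nontrivial X] : ∃ g : G, ∀ x : X, g • x ≠ x := by
  classical
  have := Fintype.ofFinite G
  have := Fintype.ofFinite X
  have := Fintype.ofFinite (orbitRel.Quotient G X)
  by_contra! hfix
  have hburnside := sum_card_fixedBy_eq_card_orbits_mul_card_group G X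
  obtain ⟨_⟩ := (pretransitive_iff_unique_quotient_of_nonempty G X).mp inferInstance
  rw [Fintype.card_unique, one_mul] at hburnside
  have hlt : ∑ _g : G, 1 < ∑ g : G, Fintype.card (fixedBy X g) := by
    refine Finset.sum_lt_sum (fun g _ => ?_) ⟨1, Finset.mem_univ _, ?_⟩
    · obtain ⟨x, hx⟩ := hfix g
      exact Fintype.card_pos_iff.mpr ⟨⟨x, hx⟩⟩
    · simp [fixedBy_one_eq_univ, Fintype.one_lt_card]
  simp only [Finset.sum_const, Finset.card_univ, smul_eq_mul, mul_one] at hlt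
  omega

theorem Subgroup.exists_forall_conj_notMem {G : Type*} [Group G] [Finite G] {H : Subgroup G}
    (hH : H ≠ ⊤) : ∃ g : G, ∀ x : G, x * g * x⁻¹ ∉ H := by
  have := QuotientGroup.nontrivial_iff.mpr hH
  obtain ⟨g, hg⟩ := MulAction.exists_forall_smul_ne G (G ⧸ H)
  refine ⟨g, fun x hx => hg (x⁻¹ : G) ?_⟩
  rw [MulAction.Quotient.smul_mk, QuotientGroup.eq, smul_eq_mul]
  simpa [mul_assoc] using H.inv_mem hx

theorem two_le_normalCoveringNumber (G : Type*) [Group G] [Finite G] :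
    2 ≤ normalCoveringNumber G := by
  refine le_sInf ?_
  rintro _ ⟨k, rfl, H, hH, hcover⟩
  by_contra! hk
  norm_cast at hk
  interval_cases k
  · exact (hcover 1).choose.elim0
  · obtain ⟨g, hg⟩ := (H 0).exists_forall_conj_notMem (hH 0)
    obtain ⟨i, x, hx⟩ := hcover g
    exact hg x (Subsingleton.elim i 0 ▸ hx)

theorem normalCoveringNumber_le {G : Type*} [Group G] {k : ℕ} (H : Fin k → Subgroup G)
    (hH : ∀ i, H i ≠ ⊤) (hcover : ∀ g : G, ∃ i, ∃ x : G, x * g * x⁻¹ ∈ H i) :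
    normalCoveringNumber G ≤ k :=
  sInf_le ⟨k, rfl, H, hH, hcover⟩

theorem exists_periodic_inv_mul_mul_succ_eq {G : Type*} [Group G] {n : ℕ} {u : ℕ → G}
    (hu : Function.Periodic u n) {c : G} (hc : c ^ n = ((List.range n).map u).prod) :
    ∃ m : ℕ → G, Function.Periodic m n ∧ ∀ k, (m k)⁻¹ * c * m (k + 1) = u k := by
  set P : ℕ → G := fun k => ((List.range k).map u).prod
  have hPn : P n = c ^ n := hc.symm
  have hP_succ (k : ℕ) : P (k + 1) = P k * u k := List.prod_range_succ u k
  have hP_add (k : ℕ) : P (k + n) = P n * P k := by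
    induction k with
    | zero => simp [P]
    | succ k ih => rw [add_right_comm, hP_succ, ih, hP_succ, mul_assoc, hu]
  refine ⟨fun k => (c ^ k)⁻¹ * P k, fun k => ?_, fun k => ?_⟩
  · simp only [hP_add, hPn, pow_add]
    group
  · simp only [hP_succ, pow_succ]
    group

theorem ZMod.exists_inv_mul_mul_add_one_eq {G : Type*} [Group G] {n : ℕ} [NeZero n]
    (f : ZMod n → G) {c : G} (hc : c ^ n = ((List.range n).map fun k : ℕ => f k).prod) :
    ∃ m : ZMod n → G, ∀ j, (m j)⁻¹ * c * m (j + 1) = f j := by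
  have hu : Function.Periodic (fun k : ℕ => f k) n := fun k => by simp
  obtain ⟨m, hm_periodic, hm⟩ := exists_periodic_inv_mul_mul_succ_eq hu hc
  refine ⟨fun j => m j.val, fun j => ?_⟩
  have hval : (j + 1).val = (j.val + 1) % n := by
    rw [← ZMod.val_natCast, Nat.cast_add, ZMod.natCast_zmod_val, Nat.cast_one]
  simpa [hval, hm_periodic.map_mod_nat] using hm j.val

theorem ZMod.exists_inv_mul_mul_add_eq {G : Type*} [Group G] [Finite G] {p : ℕ} [Fact p.Prime]
    (hcop : (Nat.card G).Coprime p) (f : ZMod p → G) {i : ZMod p} (hi : i ≠ 0) :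
    ∃ (m : ZMod p → G) (c : G), ∀ j, (m j)⁻¹ * c * m (j + i) = f j := by
  obtain ⟨c, hc⟩ := (powCoprime hcop).surjective
    ((List.range p).map fun k : ℕ => f (k * i)).prod
  obtain ⟨m, hm⟩ := ZMod.exists_inv_mul_mul_add_one_eq (fun k => f (k * i)) hc
  refine ⟨fun j => m (j * i⁻¹), c, fun j => ?_⟩
  simpa [add_mul, mul_inv_cancel₀ hi, mul_assoc, inv_mul_cancel₀ hi] using hm (j * i⁻¹)

instance [Finite S] [NeZero p] : Finite (WreathCp p S) :=
  Finite.of_equiv _ SemidirectProduct.equivProd.symm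

theorem mem_wreathBase_iff {g : WreathCp p S} : g ∈ wreathBase p S ↔ g.right = 1 := by
  rw [wreathBase, SemidirectProduct.range_inl_eq_ker_rightHom, MonoidHom.mem_ker,
    SemidirectProduct.rightHom_eq_right]

theorem wreathBase_ne_top [Fact (1 < p)] : wreathBase p S ≠ ⊤ := by
  intro h
  have := (mem_wreathBase_iff p S).mp (h ▸ Subgroup.mem_top (⟨1, .ofAdd 1⟩ : WreathCp p S))
  exact zero_ne_one (congrArg Multiplicative.toAdd this).symm

theorem diagHom_range_ne_top [Nontrivial S] [Fact (1 < p)] : (diagHom p S).range ≠ ⊤ := by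
  obtain ⟨a, ha⟩ := exists_ne (1 : S)
  intro h
  obtain ⟨⟨s, x⟩, hsx⟩ := h ▸ Subgroup.mem_top (⟨Pi.mulSingle 0 a, 1⟩ : WreathCp p S)
  have hconst : (fun _ => s) = (Pi.mulSingle 0 a : ZMod p → S) :=
    congrArg SemidirectProduct.left hsx
  have h0 : s = a := by simpa using congrFun hconst 0
  have h1 : s = 1 := by simpa using congrFun hconst 1
  exact ha (h0.symm.trans h1)

theorem conj_diagHom (m : ZMod p → S) (c : S) (x : Multiplicative (ZMod p)) :
    (SemidirectProduct.inl m)⁻¹ * diagHom p S (c, x) * SemidirectProduct.inl m =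
      ⟨fun j => (m j)⁻¹ * c * m (j + x.toAdd), x⟩ := by
  change _ * (⟨fun _ => c, x⟩ : WreathCp p S) * _ = _
  ext j
  · simp only [SemidirectProduct.mul_left, SemidirectProduct.mul_right,
      SemidirectProduct.inv_left, SemidirectProduct.inv_right, SemidirectProduct.left_inl,
      SemidirectProduct.right_inl]
    simp [shiftHom, shiftAut, mul_assoc]
  · simp

theorem exists_conj_mem_diagHom_range [Finite S] [Fact p.Prime] (hcop : (Nat.card S).Coprime p)
    {g : WreathCp p S} (hg : g ∉ wreathBase p S) :
    ∃ m ∈ wreathBase p S, m * g * m⁻¹ ∈ (diagHom p S).range := by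
  have hi : g.right.toAdd ≠ 0 := (mem_wreathBase_iff p S).not.mp hg
  obtain ⟨m, c, hmc⟩ := ZMod.exists_inv_mul_mul_add_eq hcop g.left hi
  refine ⟨SemidirectProduct.inl m, ⟨m, rfl⟩, (c, g.right), ?_⟩
  have hg_eq : (SemidirectProduct.inl m)⁻¹ * diagHom p S (c, g.right) *
      SemidirectProduct.inl m = g := by
    rw [conj_diagHom]
    exact SemidirectProduct.ext (funext hmc) rfl
  conv_rhs => rw [← hg_eq]
  group

theorem wreath_product_cover (hS : IsSimpleGroup S) [Finite S]
    (hp : Nat.Prime p) (hdvd : ¬ p ∣ Nat.card S) :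
    ((wreathBase p S : Set (WreathCp p S)) ∪
      ⋃ m ∈ (wreathBase p S : Set (WreathCp p S)),
        (fun y => m⁻¹ * y * m) '' (((diagHom p S).range : Subgroup (WreathCp p S)) :
          Set (WreathCp p S)) = Set.univ) ∧
    normalCoveringNumber (WreathCp p S) = 2 := by
  have := hS.toNontrivial
  have : Fact p.Prime := ⟨hp⟩
  have hcop : (Nat.card S).Coprime p := (hp.coprime_iff_not_dvd.mpr hdvd).symm
  have hcover (g : WreathCp p S) :
      g ∈ wreathBase p S ∨ ∃ m ∈ wreathBase p S, m * g * m⁻¹ ∈ (diagHom p S).range :=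
    or_iff_not_imp_left.mpr (exists_conj_mem_diagHom_range p S hcop)
  refine ⟨Set.eq_univ_of_forall fun g => ?_, le_antisymm ?_ (two_le_normalCoveringNumber _)⟩
  · rcases hcover g with hg | ⟨m, hm, hmg⟩
    · exact Or.inl hg
    · exact Or.inr (Set.mem_iUnion₂.mpr ⟨m, hm, _, hmg, by group⟩)
  · refine normalCoveringNumber_le ![wreathBase p S, (diagHom p S).range]
      (Fin.forall_fin_two.mpr ⟨wreathBase_ne_top p S, diagHom_range_ne_top p S⟩) fun g => ?_
    rcases hcover g with hg | ⟨m, -, hmg⟩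
    exacts [⟨0, 1, by simpa using hg⟩, ⟨1, m, hmg⟩]
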